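/- arXiv:2511.10758 — 2 statements merged into one kernel-verified Lean document; each statement's English description precedes it below -/
import Mathlib

section
/- The set of density operators with Schmidt number at most k is closed under local completely positive maps: if ρ on ℂ^{d_A} ⊗ ℂ^{d_B} has Schmidt number at most k and F is a completely positive trace-preserving map on matrices over ℂ^{d_B}, then (id ⊗ F)(ρ), when nonzero, normalized to trace 1, has Schmidt number at most k. -/
open Matrix BigOperators Kronecker
open scoped ComplexOrder

/-- The coefficient matrix of a bipartite pure state. -/
def toMat {dA dB : ℕ} (ψ : Fin dA × Fin dB → ℂ) : Matrix (Fin dA) (Fin dB) ℂ :=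
  Matrix.of fun i j => ψ (i, j)

/-- Schmidt rank of a bipartite pure state: rank of its coefficient matrix. -/
noncomputable def schmidtRank {dA dB : ℕ} (ψ : Fin dA × Fin dB → ℂ) : ℕ :=
  (toMat ψ).rank

/-- `ρ` has Schmidt number at most `k`: it is a finite convex combination of projectors
onto (normalized) pure states of Schmidt rank at most `k`. -/
def SchmidtNumberLE {dA dB : ℕ} (k : ℕ)
    (ρ : Matrix (Fin dA × Fin dB) (Fin dA × Fin dB) ℂ) : Prop :=
  ∃ (n : ℕ) (p : Fin n → ℝ) (ψ : Fin n → (Fin dA × Fin dB → ℂ)),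
    (∀ j, 0 ≤ p j) ∧ (∑ j, p j = 1) ∧
    (∀ j, ∑ q, Complex.normSq (ψ j q) = 1) ∧
    (∀ j, schmidtRank (ψ j) ≤ k) ∧
    ρ = ∑ j, (p j : ℂ) • Matrix.vecMulVec (ψ j) (star (ψ j))

lemma aux1 {α : Type*} [Fintype α] [DecidableEq α] (M : Matrix α α ℂ) (x : α → ℂ) :
    M * Matrix.vecMulVec x (star x) * Mᴴ = Matrix.vecMulVec (M *ᵥ x) (star (M *ᵥ x)) := by
  ext a b
  simp only [Matrix.mul_apply, Matrix.vecMulVec_apply, Matrix.conjTranspose_apply,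
    Matrix.mulVec, dotProduct, Pi.star_apply, star_sum, star_mul', Finset.sum_mul,
    Finset.mul_sum]
  congr 1; ext d; congr 1; ext c; ring

lemma aux2 {dA dB : ℕ} (Km : Matrix (Fin dB) (Fin dB) ℂ) (ψ : Fin dA × Fin dB → ℂ) :
    toMat (((1 : Matrix (Fin dA) (Fin dA) ℂ) ⊗ₖ Km) *ᵥ ψ) = toMat ψ * Kmᵀ := by
  ext i j
  simp [toMat, Matrix.mulVec, dotProduct, Matrix.mul_apply, Matrix.kroneckerMap_apply,
    Fintype.sum_prod_type, Matrix.one_apply, ite_mul, Finset.sum_ite_eq, mul_comm]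

lemma aux3 {α : Type*} [Fintype α] (x : α → ℂ) :
    Matrix.trace (Matrix.vecMulVec x (star x)) = ((∑ q, Complex.normSq (x q) : ℝ) : ℂ) := by
  simp [Matrix.trace, Matrix.diag, Matrix.vecMulVec_apply, Complex.mul_conj]

lemma aux4 {dA dB : ℕ} (k : ℕ) (t : ℝ) (φ : Fin dA × Fin dB → ℂ)
    (h : schmidtRank φ ≤ k) : schmidtRank (fun q => (t : ℂ) * φ q) ≤ k := by
  have hm : toMat (fun q => (t : ℂ) * φ q) = ((t : ℂ) • (1 : Matrix (Fin dA) (Fin dA) ℂ)) * toMat φ := by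
    ext i j; simp [toMat, Matrix.smul_mul, Matrix.one_mul]
  unfold schmidtRank at *
  rw [hm]
  exact le_trans (Matrix.rank_mul_le_right _ _) h

set_option maxHeartbeats 1000000 in
/-- Schmidt number at most `k` is preserved by local CPTP maps: if `ρ` is a
density operator on `ℂ^{dA} ⊗ ℂ^{dB}` with Schmidt number at most `k`, `F` is a CPTP map
on matrices over `ℂ^{dB}` given by Kraus operators `K i` (with `∑ i, (K i)ᴴ * K i = 1`),
and `σ = (id ⊗ F)(ρ) = ∑ i, (I ⊗ K i) ρ (I ⊗ K i)ᴴ` is nonzero, then `σ` normalized to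
trace 1 has Schmidt number at most `k`. -/
theorem schmidt_number_le_local_cptp {dA dB : ℕ} (k m : ℕ)
    (ρ : Matrix (Fin dA × Fin dB) (Fin dA × Fin dB) ℂ)
    (K : Fin m → Matrix (Fin dB) (Fin dB) ℂ)
    (hTP : ∑ i, (K i)ᴴ * K i = 1)
    (hρ : ρ.PosSemidef) (htr : ρ.trace = 1) (hSN : SchmidtNumberLE k ρ)
    (σ : Matrix (Fin dA × Fin dB) (Fin dA × Fin dB) ℂ)
    (hσ : σ = ∑ i, ((1 : Matrix (Fin dA) (Fin dA) ℂ) ⊗ₖ K i) * ρ *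
        ((1 : Matrix (Fin dA) (Fin dA) ℂ) ⊗ₖ K i)ᴴ)
    (hne : σ ≠ 0) :
    SchmidtNumberLE k (σ.trace⁻¹ • σ) := by
  classical
  obtain ⟨n, p, ψ, hp0, hp1, hψnorm, hψrank, hρeq⟩ := hSN
  obtain ⟨j0, -, -⟩ := Finset.exists_ne_zero_of_sum_ne_zero
    (show ∑ j, p j ≠ 0 by rw [hp1]; norm_num)
  set φ : Fin m → Fin n → (Fin dA × Fin dB → ℂ) :=
    fun i j => ((1 : Matrix (Fin dA) (Fin dA) ℂ) ⊗ₖ K i) *ᵥ ψ j with hφdef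
  set r : Fin m → Fin n → ℝ := fun i j => ∑ q, Complex.normSq (φ i j q) with hrdef
  have hr0 : ∀ i j, 0 ≤ r i j := fun i j => Finset.sum_nonneg fun q _ => Complex.normSq_nonneg _
  have hrz : ∀ i j, r i j = 0 → φ i j = 0 := by
    intro i j h
    funext q
    exact Complex.normSq_eq_zero.1
      ((Finset.sum_eq_zero_iff_of_nonneg (fun q _ => Complex.normSq_nonneg _)).1 h q
        (Finset.mem_univ q))
  have hvz : Matrix.vecMulVec (0 : Fin dA × Fin dB → ℂ) (star (0 : Fin dA × Fin dB → ℂ)) = 0 := by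
    ext a b; simp [Matrix.vecMulVec_apply]
  have hσ2 : σ = ∑ i, ∑ j, (p j : ℂ) • Matrix.vecMulVec (φ i j) (star (φ i j)) := by
    rw [hσ, hρeq]
    refine Finset.sum_congr rfl fun i _ => ?_
    rw [Finset.mul_sum, Finset.sum_mul]
    refine Finset.sum_congr rfl fun j _ => ?_
    rw [Matrix.mul_smul, Matrix.smul_mul, aux1]
  set c : ℝ := ∑ i, ∑ j, p j * r i j with hcdef
  have hc0 : 0 ≤ c := Finset.sum_nonneg fun i _ => Finset.sum_nonneg fun j _ =>
    mul_nonneg (hp0 j) (hr0 i j)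
  have htrσ : σ.trace = (c : ℂ) := by
    rw [hσ2]
    simp only [Matrix.trace_sum, Matrix.trace_smul, aux3, smul_eq_mul, hcdef, hrdef]
    push_cast
    rfl
  have hcne : c ≠ 0 := by
    intro h0
    apply hne
    have hz : ∀ i ∈ Finset.univ, ∀ j ∈ (Finset.univ : Finset (Fin n)), p j * r i j = 0 := by
      intro i hi j hj
      have hi' := (Finset.sum_eq_zero_iff_of_nonneg fun i _ =>
        Finset.sum_nonneg fun j _ => mul_nonneg (hp0 j) (hr0 i j)).1 h0 i hi
      exact (Finset.sum_eq_zero_iff_of_nonneg fun j _ =>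
        mul_nonneg (hp0 j) (hr0 i j)).1 hi' j hj
    rw [hσ2]
    refine Finset.sum_eq_zero fun i hi => Finset.sum_eq_zero fun j hj => ?_
    rcases mul_eq_zero.1 (hz i hi j hj) with h | h
    · simp [h]
    · rw [hrz i j h, hvz, smul_zero]
  have hcpos : 0 < c := lt_of_le_of_ne hc0 (Ne.symm hcne)
  have hrpos : ∀ i j, φ i j ≠ 0 → 0 < r i j := by
    intro i j h
    rcases lt_or_eq_of_le (hr0 i j) with h' | h'
    · exact h'
    · exact absurd (hrz i j h'.symm) h
  set Ψ : Fin m × Fin n → (Fin dA × Fin dB → ℂ) :=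
    fun ij => if φ ij.1 ij.2 = 0 then ψ j0
      else fun q => (((Real.sqrt (r ij.1 ij.2))⁻¹ : ℝ) : ℂ) * φ ij.1 ij.2 q with hΨdef
  refine ⟨m * n,
    fun a => p (finProdFinEquiv.symm a).2 *
      r (finProdFinEquiv.symm a).1 (finProdFinEquiv.symm a).2 / c,
    fun a => Ψ (finProdFinEquiv.symm a), ?_, ?_, ?_, ?_, ?_⟩
  · intro a
    exact div_nonneg (mul_nonneg (hp0 _) (hr0 _ _)) hc0
  · have hE : (∑ a : Fin (m * n), p (finProdFinEquiv.symm a).2 *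
        r (finProdFinEquiv.symm a).1 (finProdFinEquiv.symm a).2 / c) =
        ∑ ij : Fin m × Fin n, p ij.2 * r ij.1 ij.2 / c :=
      Fintype.sum_equiv finProdFinEquiv.symm _ _ fun a => rfl
    dsimp only
    rw [hE, Fintype.sum_prod_type]
    simp only [div_eq_mul_inv, ← Finset.sum_mul]
    rw [← hcdef]
    exact mul_inv_cancel₀ hcne
  · intro a
    dsimp only
    set i := (finProdFinEquiv.symm a).1 with hidef
    set j := (finProdFinEquiv.symm a).2 with hjdef
    rw [hΨdef]
    dsimp only
    by_cases h : φ i j = 0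
    · rw [if_pos h]
      exact hψnorm j0
    · rw [if_neg h]
      have hrp := hrpos i j h
      have hsq : Real.sqrt (r i j) * Real.sqrt (r i j) = r i j := Real.mul_self_sqrt (hr0 i j)
      have hterm : ∀ q, Complex.normSq ((((Real.sqrt (r i j))⁻¹ : ℝ) : ℂ) * φ i j q)
          = (Real.sqrt (r i j))⁻¹ * (Real.sqrt (r i j))⁻¹ * Complex.normSq (φ i j q) := by
        intro q
        rw [Complex.normSq_mul, Complex.normSq_ofReal]
      rw [Finset.sum_congr rfl fun q _ => hterm q, ← Finset.mul_sum]
      show (Real.sqrt (r i j))⁻¹ * (Real.sqrt (r i j))⁻¹ * r i j = 1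
      rw [← mul_inv, hsq, inv_mul_cancel₀ (ne_of_gt hrp)]
  · intro a
    dsimp only
    set i := (finProdFinEquiv.symm a).1 with hidef
    set j := (finProdFinEquiv.symm a).2 with hjdef
    rw [hΨdef]
    dsimp only
    by_cases h : φ i j = 0
    · rw [if_pos h]
      exact hψrank j0
    · rw [if_neg h]
      refine aux4 k _ _ ?_
      have hre : schmidtRank (φ i j) = (toMat (ψ j) * (K i)ᵀ).rank := by
        unfold schmidtRank
        rw [hφdef]
        exact congrArg Matrix.rank (by rw [aux2])
      calc schmidtRank (φ i j) = (toMat (ψ j) * (K i)ᵀ).rank := hre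
        _ ≤ (toMat (ψ j)).rank := Matrix.rank_mul_le_left _ _
        _ ≤ k := hψrank j
  · dsimp only
    rw [htrσ, hσ2]
    have hE : (∑ a : Fin (m * n), ((p (finProdFinEquiv.symm a).2 *
          r (finProdFinEquiv.symm a).1 (finProdFinEquiv.symm a).2 / c : ℝ) : ℂ) •
          Matrix.vecMulVec (Ψ (finProdFinEquiv.symm a)) (star (Ψ (finProdFinEquiv.symm a)))) =
        ∑ ij : Fin m × Fin n, ((p ij.2 * r ij.1 ij.2 / c : ℝ) : ℂ) •
          Matrix.vecMulVec (Ψ ij) (star (Ψ ij)) :=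
      Fintype.sum_equiv finProdFinEquiv.symm _ _ fun a => rfl
    rw [hE, Fintype.sum_prod_type, Finset.smul_sum]
    refine Finset.sum_congr rfl fun i _ => ?_
    rw [Finset.smul_sum]
    refine Finset.sum_congr rfl fun j _ => ?_
    rw [hΨdef]
    dsimp only
    by_cases h : φ i j = 0
    · have hr' : r i j = 0 := by
        rw [hrdef]; simp [h]
      rw [if_pos h, h, hvz, smul_zero, smul_zero, hr']
      simp
    · rw [if_neg h]
      have hrp := hrpos i j h
      have hsq : Real.sqrt (r i j) * Real.sqrt (r i j) = r i j := Real.mul_self_sqrt (hr0 i j)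
      have hvv : Matrix.vecMulVec (fun q => (((Real.sqrt (r i j))⁻¹ : ℝ) : ℂ) * φ i j q)
          (star (fun q => (((Real.sqrt (r i j))⁻¹ : ℝ) : ℂ) * φ i j q))
          = (((Real.sqrt (r i j))⁻¹ * (Real.sqrt (r i j))⁻¹ : ℝ) : ℂ) •
            Matrix.vecMulVec (φ i j) (star (φ i j)) := by
        ext a b
        simp [Matrix.vecMulVec_apply, star_mul', Complex.ofReal_mul, Matrix.smul_apply]
        ring
      rw [hvv, smul_smul, smul_smul]
      congr 1
      have hs : (p j * r i j / c) * ((Real.sqrt (r i j))⁻¹ * (Real.sqrt (r i j))⁻¹)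
          = c⁻¹ * p j := by
        rw [← mul_inv, hsq]
        field_simp
      rw [← Complex.ofReal_mul, hs]
      push_cast
      ring
end

section
/- The operator W = I_9 − (3/2) |Φ⟩⟨Φ| on ℂ^3 ⊗ ℂ^3, where |Φ⟩ = (1/√3)(|00⟩+|11⟩+|22⟩), satisfies Tr[W ρ] ≥ 0 for every density matrix ρ with Schmidt number at most 2, i.e., W is a Schmidt-number-2 witness. Equivalently: ⟨ψ| |Φ⟩⟨Φ| |ψ⟩ ≤ 2/3 for every unit vector ψ ∈ ℂ^3 ⊗ ℂ^3 of Schmidt rank at most 2. -/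
open Matrix BigOperators
open scoped ComplexOrder

/-- The maximally entangled state `|Φ⟩ = (1/√3)(|00⟩ + |11⟩ + |22⟩)` as a vector. -/
noncomputable def phiVec : Fin 3 × Fin 3 → ℂ :=
  fun p => if p.1 = p.2 then ((Real.sqrt 3 : ℂ))⁻¹ else 0

section Helpers
open scoped InnerProductSpace
open Matrix BigOperators
open scoped InnerProductSpace

lemma norm_sq_eucl {ι : Type*} [Fintype ι] (w : EuclideanSpace ℂ ι) :
    ‖w‖ ^ 2 = ∑ i, ‖w i‖ ^ 2 := by
  rw [EuclideanSpace.norm_eq, Real.sq_sqrt]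
  positivity

lemma normSq_trace_le {n : Type*} [Fintype n] [DecidableEq n] (M : Matrix n n ℂ) :
    Complex.normSq M.trace ≤ (M.rank : ℝ) * ∑ i, ∑ j, Complex.normSq (M i j) := by
  classical
  set colE : n → EuclideanSpace ℂ n := fun i => (WithLp.equiv 2 (n → ℂ)).symm (Mᵀ i) with hcol
  set K : Submodule ℂ (EuclideanSpace ℂ n) := Submodule.span ℂ (Set.range colE) with hK
  have hfr : Module.finrank ℂ K = M.rank := by
    rw [Matrix.rank_eq_finrank_span_cols]
    have : K = Submodule.map ((WithLp.linearEquiv 2 ℂ (n → ℂ)).symm : (n → ℂ) →ₗ[ℂ] EuclideanSpace ℂ n)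
        (Submodule.span ℂ (Set.range Mᵀ)) := by
      rw [Submodule.map_span]; exact congrArg (Submodule.span ℂ) (Set.range_comp _ _)
    rw [this]; exact LinearEquiv.finrank_map_eq _ _
  set r := Module.finrank ℂ K with hr
  let b : OrthonormalBasis (Fin r) ℂ K := stdOrthonormalBasis ℂ K
  set v : n → K := fun i => ⟨colE i, Submodule.subset_span (Set.mem_range_self i)⟩ with hv
  set c : n → Fin r → ℂ := fun i j => b.repr (v i) j with hc
  -- trace as a double sum
  have hcolsum : ∀ i, colE i = ∑ j, c i j • (b j : EuclideanSpace ℂ n) := by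
    intro i
    have := b.sum_repr (v i)
    calc colE i = ((v i : K) : EuclideanSpace ℂ n) := rfl
      _ = ((∑ j, c i j • b j : K) : EuclideanSpace ℂ n) := by rw [this]
      _ = ∑ j, c i j • (b j : EuclideanSpace ℂ n) := by push_cast; rfl
  have htr : M.trace = ∑ i, ∑ j, c i j * (b j : EuclideanSpace ℂ n) i := by
    rw [Matrix.trace]
    refine Finset.sum_congr rfl fun i _ => ?_
    have h1 : M.diag i = colE i i := rfl
    rw [h1, hcolsum i]
    have : (∑ j, c i j • (b j : EuclideanSpace ℂ n)) i
        = ∑ j, (c i j • (b j : EuclideanSpace ℂ n)) i := by rw [WithLp.ofLp_sum]; exact Finset.sum_apply i _ _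
    rw [this]
    rfl
  -- Cauchy–Schwarz
  set x : EuclideanSpace ℂ (n × Fin r) :=
    (WithLp.equiv 2 _).symm (fun p => starRingEnd ℂ ((b p.2 : EuclideanSpace ℂ n) p.1)) with hx
  set y : EuclideanSpace ℂ (n × Fin r) :=
    (WithLp.equiv 2 _).symm (fun p => c p.1 p.2) with hy
  have hinner : ⟪x, y⟫_ℂ = M.trace := by
    rw [htr, PiLp.inner_apply, ← Finset.sum_product']
    refine Finset.sum_congr rfl fun p _ => ?_
    simp [hx, hy, RCLike.inner_apply, mul_comm]
  have hCS : ‖⟪x, y⟫_ℂ‖ ≤ ‖x‖ * ‖y‖ := norm_inner_le_norm x y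
  have hxn : ‖x‖ ^ 2 = (r : ℝ) := by
    rw [norm_sq_eucl, Fintype.sum_prod_type, Finset.sum_comm]
    have h1 : ∀ j : Fin r, ∑ i, ‖x (i, j)‖ ^ 2 = 1 := by
      intro j
      have : ∀ i, ‖x (i, j)‖ = ‖(b j : EuclideanSpace ℂ n) i‖ := by
        intro i
        simp [hx, PiLp.toLp_apply]
      simp_rw [this]
      rw [← norm_sq_eucl]
      have h2 : ‖(b j : EuclideanSpace ℂ n)‖ = ‖b j‖ := rfl
      rw [h2, b.orthonormal.1 j, one_pow]
    rw [Finset.sum_congr rfl fun j _ => h1 j]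
    simp
  have hyn : ‖y‖ ^ 2 = ∑ i, ∑ j, Complex.normSq (M i j) := by
    rw [norm_sq_eucl, Fintype.sum_prod_type]
    have h1 : ∀ i, ∑ j, ‖y (i, j)‖ ^ 2 = ∑ k, Complex.normSq (M k i) := by
      intro i
      have hrep : ∑ j, ‖y (i, j)‖ ^ 2 = ‖b.repr (v i)‖ ^ 2 := by
        rw [norm_sq_eucl]
        rfl
      rw [hrep, b.repr.norm_map]
      have h2 : ‖v i‖ = ‖(v i : EuclideanSpace ℂ n)‖ := rfl
      rw [h2, norm_sq_eucl]
      refine Finset.sum_congr rfl fun k _ => ?_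
      have h3 : ((v i : EuclideanSpace ℂ n) k) = M k i := rfl
      rw [h3, Complex.sq_norm]
    rw [Finset.sum_congr rfl fun i _ => h1 i, Finset.sum_comm]
  have : Complex.normSq M.trace = ‖M.trace‖ ^ 2 := by
    rw [← Complex.sq_norm]
  rw [this, ← hinner]
  calc ‖⟪x, y⟫_ℂ‖ ^ 2 ≤ (‖x‖ * ‖y‖) ^ 2 := by
        apply pow_le_pow_left₀ (norm_nonneg _) hCS
      _ = ‖x‖ ^ 2 * ‖y‖ ^ 2 := by ring
      _ = (M.rank : ℝ) * ∑ i, ∑ j, Complex.normSq (M i j) := by rw [hxn, hyn, hfr]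

lemma dot_phi (ψ : Fin 3 × Fin 3 → ℂ) :
    star phiVec ⬝ᵥ ψ = ((Real.sqrt 3 : ℂ))⁻¹ * (toMat ψ).trace := by
  simp only [dotProduct, Pi.star_apply, phiVec]
  rw [Fintype.sum_prod_type, Matrix.trace, Finset.mul_sum]
  refine Finset.sum_congr rfl fun i _ => ?_
  simp [Finset.mul_sum, apply_ite, Matrix.diag, toMat, eq_comm]

lemma part2 (ψ : Fin 3 × Fin 3 → ℂ) (hn : (∑ p, Complex.normSq (ψ p)) = 1)
    (hr : (toMat ψ).rank ≤ 2) :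
    Complex.normSq (star phiVec ⬝ᵥ ψ) ≤ 2 / 3 := by
  rw [dot_phi, Complex.normSq_mul]
  have h1 : Complex.normSq (((Real.sqrt 3 : ℂ))⁻¹) = 1 / 3 := by
    rw [map_inv₀]
    have : Complex.normSq ((Real.sqrt 3 : ℝ) : ℂ) = 3 := by
      rw [Complex.normSq_ofReal, Real.mul_self_sqrt (by norm_num : (0:ℝ) ≤ 3)]
    rw [this]
    norm_num
  have h2 : Complex.normSq (toMat ψ).trace ≤ 2 := by
    have := normSq_trace_le (toMat ψ)
    have hF : ∑ i, ∑ j, Complex.normSq (toMat ψ i j) = 1 := by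
      rw [← hn, Fintype.sum_prod_type]; rfl
    rw [hF, mul_one] at this
    calc Complex.normSq (toMat ψ).trace ≤ ((toMat ψ).rank : ℝ) := this
      _ ≤ 2 := by exact_mod_cast hr
  rw [h1]
  linarith

lemma trace_vmv_mul {α : Type*} [Fintype α] (a b c d : α → ℂ) :
    (vecMulVec a b * vecMulVec c d).trace = (b ⬝ᵥ c) * (d ⬝ᵥ a) := by
  simp only [Matrix.trace, Matrix.diag, Matrix.mul_apply, vecMulVec_apply, dotProduct]
  rw [Finset.sum_mul_sum, Finset.sum_comm]
  refine Finset.sum_congr rfl fun p _ => Finset.sum_congr rfl fun q _ => by ring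

lemma trace_proj (φ ψ : Fin 3 × Fin 3 → ℂ) :
    (vecMulVec φ (star φ) * vecMulVec ψ (star ψ)).trace
      = (Complex.normSq (star φ ⬝ᵥ ψ) : ℂ) := by
  rw [trace_vmv_mul]
  have : (star ψ ⬝ᵥ φ) = starRingEnd ℂ (star φ ⬝ᵥ ψ) := by
    simp [dotProduct, map_sum, mul_comm]
  rw [this, Complex.mul_conj]

end Helpers

/-- `W = I₉ - (3/2)|Φ⟩⟨Φ|` is a Schmidt-number-2 witness:
`Tr[W ρ] ≥ 0` for every density matrix `ρ` on `ℂ³ ⊗ ℂ³` of Schmidt number at most 2.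
Equivalently, `⟨ψ| |Φ⟩⟨Φ| |ψ⟩ = |⟨Φ|ψ⟩|² ≤ 2/3` for every unit vector `ψ` of Schmidt
rank at most 2. -/
theorem schmidt_number_two_witness :
    (∀ ρ : Matrix (Fin 3 × Fin 3) (Fin 3 × Fin 3) ℂ,
      ρ.PosSemidef → ρ.trace = 1 → SchmidtNumberLE 2 ρ →
      ∃ r : ℝ, (((1 : Matrix (Fin 3 × Fin 3) (Fin 3 × Fin 3) ℂ)
          - ((3 / 2 : ℝ) : ℂ) • Matrix.vecMulVec phiVec (star phiVec)) * ρ).trace = (r : ℂ)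
        ∧ 0 ≤ r) ∧
    (∀ ψ : Fin 3 × Fin 3 → ℂ, (∑ p, Complex.normSq (ψ p)) = 1 → schmidtRank ψ ≤ 2 →
      Complex.normSq (star phiVec ⬝ᵥ ψ) ≤ 2 / 3) := by
  constructor
  · rintro ρ _hpsd htr ⟨n, p, ψ, hp0, hp1, hnorm, hrank, hρ⟩
    set s : Fin n → ℝ := fun j => Complex.normSq (star phiVec ⬝ᵥ ψ j) with hs
    refine ⟨1 - (3 / 2) * ∑ j, p j * s j, ?_, ?_⟩
    · rw [Matrix.sub_mul, Matrix.one_mul, Matrix.trace_sub, htr, Matrix.smul_mul,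
        Matrix.trace_smul]
      have hPρ : (vecMulVec phiVec (star phiVec) * ρ).trace
          = ((∑ j, p j * s j : ℝ) : ℂ) := by
        rw [hρ, Matrix.mul_sum, Matrix.trace_sum]
        push_cast
        refine Finset.sum_congr rfl fun j _ => ?_
        rw [Matrix.mul_smul, Matrix.trace_smul, trace_proj]
        simp [hs, smul_eq_mul]
      rw [hPρ]
      push_cast
      simp only [smul_eq_mul]
    · have hterm : ∀ j, s j ≤ 2 / 3 := fun j => part2 _ (hnorm j) (hrank j)
      have h1 : ∑ j, p j * s j ≤ ∑ j, p j * (2 / 3) :=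
        Finset.sum_le_sum fun j _ => mul_le_mul_of_nonneg_left (hterm j) (hp0 j)
      have h2 : ∑ j, p j * (2 / 3) = 2 / 3 := by rw [← Finset.sum_mul, hp1, one_mul]
      linarith
  · exact fun ψ h1 h2 => part2 ψ h1 h2
end
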